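/- Let $1<p<q$ and define $F:\mathbb{R}\to\mathbb{R}$ by $F(0)=0$, $F(t)=\frac{|t|^q}{q}\ln|t|$ for $0<|t|<1$, $F(t)=\frac{|t|^p}{q}\ln|t|$ for $|t|\ge 1$, and let $f = F'$. Then $\lim_{|t|\to\infty} F(t)/|t|^p = \infty$ but there is no $\mu > p$ and $T>0$ such that $0 < \mu F(t) \le f(t)t$ for all $|t| \ge T$ (i.e., the Ambrosetti–Rabinowitz condition fails). -/

import Mathlib

/-!
For `|t| ≥ 1` we have `F t / |t| ^ p = log |t| / q → ∞`. On the other hand, for `t > 1` the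
function is `F t = t ^ p log t / q`, whose derivative gives `f t * t = t ^ p (p log t + 1) / q`,
so `μ F t ≤ f t * t` amounts to `(μ - p) log t ≤ 1`, which fails for large `t` as soon as
`μ > p`.
-/

open Filter Real Topology

lemma hasDerivAt_rpow_mul_log {x : ℝ} (hx : 0 < x) (p : ℝ) :
    HasDerivAt (fun y => y ^ p * log y) (x ^ (p - 1) * (p * log x + 1)) x := by
  refine ((hasDerivAt_rpow_const (p := p) (Or.inl hx.ne')).mul
    (hasDerivAt_log hx.ne')).congr_deriv ?_
  rw [rpow_sub_one hx.ne']
  field_simp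

lemma sub_mul_log_le_one_of_le_deriv_mul {p q μ x : ℝ} (hq : 0 < q) (hx : 0 < x)
    (h : μ * (x ^ p * log x / q) ≤ x ^ (p - 1) * (p * log x + 1) / q * x) :
    (μ - p) * log x ≤ 1 := by
  have hxp : 0 < x ^ p := rpow_pos_of_pos hx p
  have hx1 : x ^ (p - 1) * x = x ^ p := by rw [rpow_sub_one hx.ne']; field_simp
  have h' : x ^ p * (μ * log x) ≤ x ^ p * (p * log x + 1) := by
    calc x ^ p * (μ * log x) = μ * (x ^ p * log x / q) * q := by field_simp
      _ ≤ x ^ (p - 1) * (p * log x + 1) / q * x * q := by gcongr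
      _ = x ^ p * (p * log x + 1) := by rw [← hx1]; field_simp
  nlinarith [le_of_mul_le_mul_left h' hxp]

theorem stmt_7 (p q : ℝ) (hp : 1 < p) (hpq : p < q)
    (F : ℝ → ℝ)
    (hF : ∀ t : ℝ, F t =
      if t = 0 then 0
      else if |t| < 1 then |t| ^ q / q * Real.log |t|
      else |t| ^ p / q * Real.log |t|)
    (f : ℝ → ℝ) (hf : f = deriv F) :
    (Filter.Tendsto (fun t : ℝ => F t / |t| ^ p)
        (Filter.comap (fun t : ℝ => |t|) Filter.atTop) Filter.atTop) ∧
    ¬ ∃ μ > p, ∃ T > 0, ∀ t : ℝ, T ≤ |t| → 0 < μ * F t ∧ μ * F t ≤ f t * t := by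
  have hq : 0 < q := by linarith
  have hF_large : ∀ t, 1 ≤ |t| → F t = |t| ^ p * log |t| / q := fun t ht => by
    rw [hF, if_neg (abs_pos.1 (by linarith)), if_neg (not_lt.2 ht)]
    ring
  constructor
  · refine ((tendsto_log_atTop.atTop_div_const hq).comp tendsto_comap).congr' ?_
    filter_upwards [preimage_mem_comap (eventually_ge_atTop 1)] with t (ht : 1 ≤ |t|)
    have : |t| ^ p ≠ 0 := (rpow_pos_of_pos (by linarith) p).ne'
    rw [Function.comp_apply, hF_large t ht]
    field_simp
  · rintro ⟨μ, hμ, T, -, hAR⟩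
    obtain ⟨t, hTt, ht1, hlog⟩ := ((eventually_ge_atTop T).and ((eventually_gt_atTop 1).and
      ((tendsto_log_atTop.const_mul_atTop (sub_pos.2 hμ)).eventually_gt_atTop 1))).exists
    have ht0 : 0 < t := by linarith
    have hF_near : F =ᶠ[𝓝 t] fun x => x ^ p * log x / q := by
      filter_upwards [lt_mem_nhds ht1] with x hx
      rw [hF_large x (by rw [abs_of_pos (by linarith)]; linarith), abs_of_pos (by linarith)]
    have hft : f t = t ^ (p - 1) * (p * log t + 1) / q := by
      rw [hf, hF_near.deriv_eq]
      exact ((hasDerivAt_rpow_mul_log ht0 p).div_const q).deriv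
    obtain ⟨-, hle⟩ := hAR t (by rwa [abs_of_pos ht0])
    rw [hft, hF_near.eq_of_nhds] at hle
    linarith [sub_mul_log_le_one_of_le_deriv_mul hq ht0 hle]
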